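/- arXiv:2209.07646 — 4 statements merged into one kernel-verified Lean document; each statement's English description precedes it below -/
import Mathlib

section
/- For any smooth Hamiltonian H(q,p), the augmented Hamiltonian H̄(q,p,q̃,p̃) = H(q,p̃) + H(q̃,p) + ω(‖q-q̃‖² + ‖p-p̃‖²)/2 restricted to the diagonal submanifold {q = q̃, p = p̃} equals 2H(q,p), and the restriction of the augmented Hamiltonian flow to initial conditions on the diagonal satisfies: if (q(t),p(t),q̃(t),p̃(t)) solves the augmented Hamilton equations with q(0)=q̃(0) and p(0)=p̃(0), then q(t)=q̃(t) and p(t)=p̃(t) for all t, and (q(t),p(t)) solves the original Hamilton equations for H. -/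
/-!
Swapping the two copies, `(q, p, q̃, p̃) ↦ (q̃, p̃, q, p)`, is a linear symmetry of the augmented
vector field. A solution starting on the diagonal therefore has its swap as a second solution with
the same initial value, and by uniqueness the two coincide, i.e. the solution stays on the
diagonal. There the coupling terms vanish and each copy obeys Hamilton's equations for `H`.
-/

open Function Set Topology

theorem LocallyLipschitz.const_smul {α 𝕜 E : Type*} [PseudoEMetricSpace α] [NormedField 𝕜]
    [SeminormedAddCommGroup E] [NormedSpace 𝕜 E] {f : α → E} (hf : LocallyLipschitz f) (c : 𝕜) :
    LocallyLipschitz fun x => c • f x :=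
  (lipschitzWith_smul c).locallyLipschitz.comp hf

section ODE

variable {E : Type*} [NormedAddCommGroup E] [NormedSpace ℝ E]

theorem ODE_solution_unique_univ_of_locallyLipschitz {F : E → E} (hF : LocallyLipschitz F)
    {f g : ℝ → E} (hf : ∀ t, HasDerivAt f (F (f t)) t) (hg : ∀ t, HasDerivAt g (F (g t)) t)
    {t₀ : ℝ} (heq : f t₀ = g t₀) : f = g := by
  have hfc : Continuous f := continuous_iff_continuousAt.2 fun t => (hf t).continuousAt
  have hgc : Continuous g := continuous_iff_continuousAt.2 fun t => (hg t).continuousAt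
  have hopen : IsOpen {t | f t = g t} := isOpen_iff_mem_nhds.2 fun t ht => by
    obtain ⟨K, u, hu, hKu⟩ := hF (f t)
    have hfu : ∀ᶠ s in 𝓝 t, f s ∈ u := hfc.continuousAt hu
    have hgu : ∀ᶠ s in 𝓝 t, g s ∈ u := hgc.continuousAt (ht ▸ hu)
    exact ODE_solution_unique_of_eventually (.of_forall fun _ => hKu)
      (hfu.mono fun s hs => ⟨hf s, hs⟩) (hgu.mono fun s hs => ⟨hg s, hs⟩) ht
  have hclopen : IsClopen {t | f t = g t} := ⟨isClosed_eq hfc hgc, hopen⟩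
  funext t
  exact eq_univ_iff_forall.1 (hclopen.eq_univ ⟨t₀, heq⟩) t

theorem ODE_solution_isFixedPt_of_commute {F : E → E} (hF : LocallyLipschitz F)
    (σ : E →L[ℝ] E) (hσ : ∀ x, F (σ x) = σ (F x)) {f : ℝ → E}
    (hf : ∀ t, HasDerivAt f (F (f t)) t) {t₀ : ℝ} (h₀ : IsFixedPt σ (f t₀)) (t : ℝ) :
    IsFixedPt σ (f t) := by
  have hσf : ∀ t, HasDerivAt (σ ∘ f) (F ((σ ∘ f) t)) t := fun t => by
    simpa only [comp_apply, hσ] using σ.hasFDerivAt.comp_hasDerivAt t (hf t)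
  exact congrFun (ODE_solution_unique_univ_of_locallyLipschitz hF hσf hf h₀) t

end ODE

section AugmentedHamiltonian

variable {E : Type*} [NormedAddCommGroup E] [NormedSpace ℝ E]

/-- The right-hand side of the augmented Hamilton equations at `((q, p), (q̃, p̃))`, where
`gq q p` and `gp q p` stand for the partial gradients `∇_q H(q, p)` and `∇_p H(q, p)`. -/
def augmentedHamiltonField (gq gp : E → E → E) (ω : ℝ) (z : (E × E) × (E × E)) :
    (E × E) × (E × E) :=
  ((gp z.2.1 z.1.2 + ω • (z.1.2 - z.2.2), -gq z.1.1 z.2.2 - ω • (z.1.1 - z.2.1)),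
   (gp z.1.1 z.2.2 + ω • (z.2.2 - z.1.2), -gq z.2.1 z.1.2 - ω • (z.2.1 - z.1.1)))

theorem augmentedHamiltonField_prodComm (gq gp : E → E → E) (ω : ℝ) (z : (E × E) × (E × E)) :
    augmentedHamiltonField gq gp ω (ContinuousLinearEquiv.prodComm ℝ _ _ z) =
      ContinuousLinearEquiv.prodComm ℝ _ _ (augmentedHamiltonField gq gp ω z) :=
  rfl

theorem locallyLipschitz_augmentedHamiltonField {gq gp : E → E → E}
    (hg : LocallyLipschitz fun x : E × E => (gq x.1 x.2, gp x.1 x.2)) (ω : ℝ) :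
    LocallyLipschitz (augmentedHamiltonField gq gp ω) := by
  have hq : LocallyLipschitz (uncurry gq) := LipschitzWith.prod_fst.locallyLipschitz.comp hg
  have hp : LocallyLipschitz (uncurry gp) := LipschitzWith.prod_snd.locallyLipschitz.comp hg
  have h₁ : LocallyLipschitz fun z : (E × E) × (E × E) => z.1 :=
    LipschitzWith.prod_fst.locallyLipschitz
  have h₂ : LocallyLipschitz fun z : (E × E) × (E × E) => z.2 :=
    LipschitzWith.prod_snd.locallyLipschitz
  have hfst : LocallyLipschitz fun x : E × E => x.1 := LipschitzWith.prod_fst.locallyLipschitz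
  have hsnd : LocallyLipschitz fun x : E × E => x.2 := LipschitzWith.prod_snd.locallyLipschitz
  have h₁₁ := hfst.comp h₁
  have h₁₂ := hsnd.comp h₁
  have h₂₁ := hfst.comp h₂
  have h₂₂ := hsnd.comp h₂
  refine .prodMk (.prodMk ?_ ?_) (.prodMk ?_ ?_)
  · exact (hp.comp (h₂₁.prodMk h₁₂)).add ((h₁₂.sub h₂₂).const_smul ω)
  · exact (hq.comp (h₁₁.prodMk h₂₂)).neg.sub ((h₁₁.sub h₂₁).const_smul ω)
  · exact (hp.comp (h₁₁.prodMk h₂₂)).add ((h₂₂.sub h₁₂).const_smul ω)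
  · exact (hq.comp (h₂₁.prodMk h₁₂)).neg.sub ((h₂₁.sub h₁₁).const_smul ω)

end AugmentedHamiltonian

theorem augmented_hamiltonian_diagonal_general
    {d : ℕ} (H : EuclideanSpace ℝ (Fin d) → EuclideanSpace ℝ (Fin d) → ℝ) (ω : ℝ)
    (hLip : LocallyLipschitz (fun x : EuclideanSpace ℝ (Fin d) × EuclideanSpace ℝ (Fin d) =>
      (gradient (fun q' => H q' x.2) x.1, gradient (fun p' => H x.1 p') x.2)))
    (Q P Qt Pt : ℝ → EuclideanSpace ℝ (Fin d))
    (hQ : ∀ t : ℝ, HasDerivAt Q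
      (gradient (fun p' => H (Qt t) p') (P t) + ω • (P t - Pt t)) t)
    (hP : ∀ t : ℝ, HasDerivAt P
      (-(gradient (fun q' => H q' (Pt t)) (Q t)) - ω • (Q t - Qt t)) t)
    (hQt : ∀ t : ℝ, HasDerivAt Qt
      (gradient (fun p' => H (Q t) p') (Pt t) + ω • (Pt t - P t)) t)
    (hPt : ∀ t : ℝ, HasDerivAt Pt
      (-(gradient (fun q' => H q' (P t)) (Qt t)) - ω • (Qt t - Q t)) t)
    (hq0 : Q 0 = Qt 0) (hp0 : P 0 = Pt 0) :
    (∀ q p : EuclideanSpace ℝ (Fin d),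
      H q p + H q p + ω * (‖q - q‖ ^ 2 / 2 + ‖p - p‖ ^ 2 / 2) = 2 * H q p) ∧
    (∀ t : ℝ, Q t = Qt t ∧ P t = Pt t) ∧
    (∀ t : ℝ,
      HasDerivAt Q (gradient (fun p' => H (Q t) p') (P t)) t ∧
      HasDerivAt P (-gradient (fun q' => H q' (P t)) (Q t)) t) := by
  let gq (q p : EuclideanSpace ℝ (Fin d)) := gradient (H · p) q
  let gp (q p : EuclideanSpace ℝ (Fin d)) := gradient (H q ·) p
  have hF : LocallyLipschitz (augmentedHamiltonField gq gp ω) :=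
    locallyLipschitz_augmentedHamiltonField (gq := gq) (gp := gp) hLip ω
  let z t := ((Q t, P t), (Qt t, Pt t))
  have hz (t : ℝ) : HasDerivAt z (augmentedHamiltonField gq gp ω (z t)) t :=
    ((hQ t).prodMk (hP t)).prodMk ((hQt t).prodMk (hPt t))
  have hdiag (t : ℝ) : Q t = Qt t ∧ P t = Pt t := by
    have hz₀ : IsFixedPt (ContinuousLinearEquiv.prodComm ℝ _ _).toContinuousLinearMap (z 0) := by
      simp [z, IsFixedPt, hq0, hp0]
    have := ODE_solution_isFixedPt_of_commute hF _
      (augmentedHamiltonField_prodComm _ _ ω) hz hz₀ t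
    simp only [IsFixedPt, z, ContinuousLinearEquiv.coe_coe, ContinuousLinearEquiv.prodComm_apply,
      Prod.swap_prod_mk, Prod.mk.injEq] at this
    exact ⟨this.1.1.symm, this.1.2.symm⟩
  refine ⟨fun q p => by simp; ring, hdiag, fun t => ?_⟩
  obtain ⟨hq, hp⟩ := hdiag t
  have hQ := hQ t
  have hP := hP t
  rw [← hq, ← hp, sub_self, smul_zero] at hQ hP
  exact ⟨by simpa using hQ, by simpa using hP⟩

/-- The augmented Hamiltonian
`H̄(q,p,q̃,p̃) = H(q,p̃) + H(q̃,p) + ω(‖q-q̃‖² + ‖p-p̃‖²)/2` restricted to the diagonal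
equals `2H(q,p)`, and solutions of the augmented Hamilton equations starting on the
diagonal stay on the diagonal and project to solutions of the original Hamilton equations. -/
theorem augmented_hamiltonian_diagonal
    {d : ℕ} (H : EuclideanSpace ℝ (Fin d) → EuclideanSpace ℝ (Fin d) → ℝ) (ω : ℝ)
    (hH : ContDiff ℝ 1 (fun x : EuclideanSpace ℝ (Fin d) × EuclideanSpace ℝ (Fin d) => H x.1 x.2))
    (hLip : LocallyLipschitz (fun x : EuclideanSpace ℝ (Fin d) × EuclideanSpace ℝ (Fin d) =>
      (gradient (fun q' => H q' x.2) x.1, gradient (fun p' => H x.1 p') x.2)))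
    (Q P Qt Pt : ℝ → EuclideanSpace ℝ (Fin d))
    (hQ : ∀ t : ℝ, HasDerivAt Q
      (gradient (fun p' => H (Qt t) p') (P t) + ω • (P t - Pt t)) t)
    (hP : ∀ t : ℝ, HasDerivAt P
      (-(gradient (fun q' => H q' (Pt t)) (Q t)) - ω • (Q t - Qt t)) t)
    (hQt : ∀ t : ℝ, HasDerivAt Qt
      (gradient (fun p' => H (Q t) p') (Pt t) + ω • (Pt t - P t)) t)
    (hPt : ∀ t : ℝ, HasDerivAt Pt
      (-(gradient (fun q' => H q' (P t)) (Qt t)) - ω • (Qt t - Q t)) t)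
    (hq0 : Q 0 = Qt 0) (hp0 : P 0 = Pt 0) :
    (∀ q p : EuclideanSpace ℝ (Fin d),
      H q p + H q p + ω * (‖q - q‖ ^ 2 / 2 + ‖p - p‖ ^ 2 / 2) = 2 * H q p) ∧
    (∀ t : ℝ, Q t = Qt t ∧ P t = Pt t) ∧
    (∀ t : ℝ,
      HasDerivAt Q (gradient (fun p' => H (Q t) p') (P t)) t ∧
      HasDerivAt P (-gradient (fun q' => H q' (P t)) (Q t)) t) :=
  augmented_hamiltonian_diagonal_general H ω hLip Q P Qt Pt hQ hP hQt hPt hq0 hp0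
end

section
/- The map ψ_{H_a}^{Δt} : (q, p, q̃, p̃) ↦ (q, p - Δt·∇_q H(q, p̃), q̃ + Δt·∇_p̃ H(q, p̃), p̃) is symplectic on the extended phase space R^{4d}, i.e., its Jacobian M satisfies Mᵀ J M = J where J is the canonical symplectic matrix pairing positions (q, q̃) with momenta (p, p̃). -/
/-- The canonical symplectic form on the extended phase space with coordinates
`(q, p, q̃, p̃)`, pairing the positions `(q, q̃)` with the momenta `(p, p̃)`. -/
noncomputable def extSymplForm {d : ℕ}
    (x y : EuclideanSpace ℝ (Fin d) × EuclideanSpace ℝ (Fin d) ×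
      EuclideanSpace ℝ (Fin d) × EuclideanSpace ℝ (Fin d)) : ℝ :=
  @inner ℝ _ _ x.1 y.2.1 - @inner ℝ _ _ x.2.1 y.1 + @inner ℝ _ _ x.2.2.1 y.2.2.2 - @inner ℝ _ _ x.2.2.2 y.2.2.1

/-!
The map is a shear `x ↦ x + Δt • (0, -∇_q H, ∇_p̃ H, 0)(q, p̃)` whose increment depends only on
`(q, p̃)`, so its Jacobian has the same shape, with the two partial gradients replaced by their
derivatives. Expanding the symplectic form of the sheared vectors, the `Δt²` term vanishes because
the increments have no `q`- or `p̃`-component, and the `Δt` term is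
`D²H(ū, v̄) - D²H(v̄, ū) = 0` with `ū = (u_q, u_p̃)`, by the symmetry of the second derivative.
-/

open ContinuousLinearMap InnerProductSpace Function

section Gradient

variable {E X : Type*} [NormedAddCommGroup E] [InnerProductSpace ℝ E] [CompleteSpace E]
  [NormedAddCommGroup X] [NormedSpace ℝ X]

noncomputable def gradientAlong (Φ : X → ℝ) (L : E →L[ℝ] X) (z : X) : E :=
  (toDual ℝ E).symm ((fderiv ℝ Φ z).comp L)

theorem gradient_comp_eq_gradientAlong {Φ : X → ℝ} {f : E → X} {L : E →L[ℝ] X} {a : E}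
    (hΦ : DifferentiableAt ℝ Φ (f a)) (hf : HasFDerivAt f L a) :
    gradient (Φ ∘ f) a = gradientAlong Φ L (f a) := by
  rw [gradient, (hΦ.hasFDerivAt.comp a hf).fderiv, gradientAlong]

theorem hasFDerivAt_gradientAlong {Φ : X → ℝ} (L : E →L[ℝ] X) {z : X}
    (hΦ : DifferentiableAt ℝ (fderiv ℝ Φ) z) :
    HasFDerivAt (gradientAlong Φ L)
      (((toDual ℝ E).symm.toContinuousLinearEquiv.toContinuousLinearMap : StrongDual ℝ E →L[ℝ] E) ∘L
        (compL ℝ E X ℝ).flip L ∘L fderiv ℝ (fderiv ℝ Φ) z) z :=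
  (((toDual ℝ E).symm.toContinuousLinearEquiv.toContinuousLinearMap : StrongDual ℝ E →L[ℝ] E) ∘L
    (compL ℝ E X ℝ).flip L).hasFDerivAt.comp z hΦ.hasFDerivAt

theorem inner_fderiv_gradientAlong {Φ : X → ℝ} (L : E →L[ℝ] X) {z : X}
    (hΦ : DifferentiableAt ℝ (fderiv ℝ Φ) z) (w : X) (e : E) :
    ⟪fderiv ℝ (gradientAlong Φ L) z w, e⟫_ℝ = fderiv ℝ (fderiv ℝ Φ) z w (L e) := by
  rw [(hasFDerivAt_gradientAlong L hΦ).fderiv]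
  exact toDual_symm_apply

theorem inner_fderiv_gradientAlong_inl_add_inr {Φ : E × E → ℝ} {z : E × E}
    (hΦ : DifferentiableAt ℝ (fderiv ℝ Φ) z) (w w' : E × E) :
    ⟪fderiv ℝ (gradientAlong Φ (inl ℝ E E)) z w, w'.1⟫_ℝ
      + ⟪fderiv ℝ (gradientAlong Φ (inr ℝ E E)) z w, w'.2⟫_ℝ
      = fderiv ℝ (fderiv ℝ Φ) z w w' := by
  rw [inner_fderiv_gradientAlong _ hΦ, inner_fderiv_gradientAlong _ hΦ, ← map_add,
    inl_apply, inr_apply, Prod.mk_add_mk, add_zero, zero_add]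

theorem gradient_left_eq_gradientAlong_inl {H : E → E → ℝ} {a b : E}
    (hH : DifferentiableAt ℝ (uncurry H) (a, b)) :
    gradient (fun a' => H a' b) a = gradientAlong (uncurry H) (inl ℝ E E) (a, b) :=
  gradient_comp_eq_gradientAlong (f := fun a' => (a', b)) hH (hasFDerivAt_prodMk_left a b)

theorem gradient_right_eq_gradientAlong_inr {H : E → E → ℝ} {a b : E}
    (hH : DifferentiableAt ℝ (uncurry H) (a, b)) :
    gradient (fun b' => H a b') b = gradientAlong (uncurry H) (inr ℝ E E) (a, b) :=
  gradient_comp_eq_gradientAlong (f := fun b' => (a, b')) hH (hasFDerivAt_prodMk_right a b)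

end Gradient

section Shear

variable {E : Type*} [NormedAddCommGroup E] [NormedSpace ℝ E]

def symplecticShear (Δt : ℝ) (S₁ S₂ : E × E → E) (x : E × E × E × E) : E × E × E × E :=
  (x.1, x.2.1 - Δt • S₁ (x.1, x.2.2.2), x.2.2.1 + Δt • S₂ (x.1, x.2.2.2), x.2.2.2)

theorem fderiv_symplecticShear_apply (Δt : ℝ) {G₁ G₂ : E × E → E} {x : E × E × E × E}
    (h₁ : DifferentiableAt ℝ G₁ (x.1, x.2.2.2)) (h₂ : DifferentiableAt ℝ G₂ (x.1, x.2.2.2))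
    (u : E × E × E × E) :
    fderiv ℝ (symplecticShear Δt G₁ G₂) x u = symplecticShear Δt
      (fderiv ℝ G₁ (x.1, x.2.2.2)) (fderiv ℝ G₂ (x.1, x.2.2.2)) u := by
  have hπ : HasFDerivAt (fun y : E × E × E × E => (y.1, y.2.2.2))
      ((fst ℝ E _).prod (snd ℝ E E ∘L snd ℝ E _ ∘L snd ℝ E _)) x :=
    hasFDerivAt_fst.prodMk hasFDerivAt_snd.snd.snd
  have hG₁ := h₁.hasFDerivAt.comp x hπ
  have hG₂ := h₂.hasFDerivAt.comp x hπ
  have hp : HasFDerivAt (fun y : E × E × E × E => y.2.1 - Δt • G₁ (y.1, y.2.2.2)) _ x :=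
    hasFDerivAt_snd.fst.sub (hG₁.const_smul Δt)
  have hq : HasFDerivAt (fun y : E × E × E × E => y.2.2.1 + Δt • G₂ (y.1, y.2.2.2)) _ x :=
    hasFDerivAt_snd.snd.fst.add (hG₂.const_smul Δt)
  rw [(hasFDerivAt_fst.prodMk (hp.prodMk (hq.prodMk hasFDerivAt_snd.snd.snd))).fderiv]
  rfl

end Shear

theorem eq_symplecticShear_gradientAlong {E : Type*} [NormedAddCommGroup E]
    [InnerProductSpace ℝ E] [CompleteSpace E] {H : E → E → ℝ}
    (hH : Differentiable ℝ (uncurry H)) (Δt : ℝ) :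
    (fun x : E × E × E × E => (x.1,
       x.2.1 - Δt • gradient (fun q' => H q' x.2.2.2) x.1,
       x.2.2.1 + Δt • gradient (fun p' => H x.1 p') x.2.2.2,
       x.2.2.2)) =
      symplecticShear Δt (gradientAlong (uncurry H) (inl ℝ E E))
        (gradientAlong (uncurry H) (inr ℝ E E)) := by
  funext x
  rw [gradient_left_eq_gradientAlong_inl (hH _), gradient_right_eq_gradientAlong_inr (hH _)]
  rfl

theorem extSymplForm_symplecticShear {d : ℕ} (Δt : ℝ)
    (S₁ S₂ : EuclideanSpace ℝ (Fin d) × EuclideanSpace ℝ (Fin d) → EuclideanSpace ℝ (Fin d))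
    (hS : ∀ w w', ⟪S₁ w, w'.1⟫_ℝ + ⟪S₂ w, w'.2⟫_ℝ = ⟪S₁ w', w.1⟫_ℝ + ⟪S₂ w', w.2⟫_ℝ)
    (u v : EuclideanSpace ℝ (Fin d) × EuclideanSpace ℝ (Fin d) ×
      EuclideanSpace ℝ (Fin d) × EuclideanSpace ℝ (Fin d)) :
    extSymplForm (symplecticShear Δt S₁ S₂ u) (symplecticShear Δt S₁ S₂ v) = extSymplForm u v := by
  have := hS (u.1, u.2.2.2) (v.1, v.2.2.2)
  simp only [extSymplForm, symplecticShear, inner_sub_left, inner_sub_right, inner_add_left,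
    inner_add_right, real_inner_smul_left, real_inner_smul_right] at this ⊢
  rw [real_inner_comm u.1, real_inner_comm u.2.2.2] at this
  linear_combination Δt * this

/-- The map
`ψ_{H_a}^{Δt} : (q,p,q̃,p̃) ↦ (q, p - Δt∇_q H(q,p̃), q̃ + Δt∇_p̃ H(q,p̃), p̃)`
is symplectic on the extended phase space: its Jacobian preserves the canonical
symplectic form pairing positions `(q,q̃)` with momenta `(p,p̃)`. -/
theorem psi_Ha_symplectic
    {d : ℕ} (H : EuclideanSpace ℝ (Fin d) → EuclideanSpace ℝ (Fin d) → ℝ)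
    (hH : ContDiff ℝ 2 (fun x : EuclideanSpace ℝ (Fin d) × EuclideanSpace ℝ (Fin d) => H x.1 x.2))
    (Δt : ℝ)
    (F : EuclideanSpace ℝ (Fin d) × EuclideanSpace ℝ (Fin d) ×
        EuclideanSpace ℝ (Fin d) × EuclideanSpace ℝ (Fin d) →
      EuclideanSpace ℝ (Fin d) × EuclideanSpace ℝ (Fin d) ×
        EuclideanSpace ℝ (Fin d) × EuclideanSpace ℝ (Fin d))
    (hF : F = fun x =>
      (x.1,
       x.2.1 - Δt • gradient (fun q' => H q' x.2.2.2) x.1,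
       x.2.2.1 + Δt • gradient (fun p' => H x.1 p') x.2.2.2,
       x.2.2.2)) :
    ∀ x u v, extSymplForm (fderiv ℝ F x u) (fderiv ℝ F x v) = extSymplForm u v := by
  intro x u v
  have hH' : ContDiff ℝ 2 (uncurry H) := hH
  have hD2 : Differentiable ℝ (fderiv ℝ (uncurry H)) :=
    (hH'.fderiv_right (m := 1) le_rfl).differentiable one_ne_zero
  have hG₁ := (hasFDerivAt_gradientAlong (inl ℝ _ _) (hD2 (x.1, x.2.2.2))).differentiableAt
  have hG₂ := (hasFDerivAt_gradientAlong (inr ℝ _ _) (hD2 (x.1, x.2.2.2))).differentiableAt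
  rw [hF, eq_symplecticShear_gradientAlong (hH'.differentiable two_ne_zero),
    fderiv_symplecticShear_apply _ hG₁ hG₂, fderiv_symplecticShear_apply _ hG₁ hG₂]
  refine extSymplForm_symplecticShear Δt _ _ (fun w w' => ?_) u v
  rw [inner_fderiv_gradientAlong_inl_add_inr (hD2 _),
    inner_fderiv_gradientAlong_inl_add_inr (hD2 _)]
  exact hH'.contDiffAt.isSymmSndFDerivAt (by simp) w w'
end

section
/- The map ψ_{H_b}^{Δt} : (q, p, q̃, p̃) ↦ (q + Δt·∇_p H(q̃, p), p, q̃, p̃ - Δt·∇_q̃ H(q̃, p)) is symplectic on the extended phase space R^{4d} with respect to the canonical symplectic form pairing (q, q̃) with (p, p̃). -/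
open InnerProductSpace ContinuousLinearMap

section ProdGradient

variable {E : Type*} [NormedAddCommGroup E] [InnerProductSpace ℝ E] [CompleteSpace E]

/- `E × E` carries the sup norm, so `gradient` is not available on it: the Riesz map for the
inner product `⟪x.1, y.1⟫ + ⟪x.2, y.2⟫` is assembled from that of `E`. -/
variable (E) in
noncomputable def toDualProdSymm : StrongDual ℝ (E × E) →L[ℝ] E × E :=
  let riesz := (toDual ℝ E).symm.toContinuousLinearEquiv.toContinuousLinearMap
  (riesz ∘L (compL ℝ E (E × E) ℝ).flip (inl ℝ E E)).prod
    (riesz ∘L (compL ℝ E (E × E) ℝ).flip (inr ℝ E E))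

lemma inner_toDualProdSymm (φ : StrongDual ℝ (E × E)) (x : E × E) :
    inner ℝ (toDualProdSymm E φ).1 x.1 + inner ℝ (toDualProdSymm E φ).2 x.2 = φ x := by
  simp [toDualProdSymm, toDual_symm_apply, ← map_add]

noncomputable def gradientProd (f : E × E → ℝ) (z : E × E) : E × E :=
  toDualProdSymm E (fderiv ℝ f z)

lemma gradientProd_fst {f : E × E → ℝ} {q p : E} (hf : DifferentiableAt ℝ f (q, p)) :
    (gradientProd f (q, p)).1 = gradient (fun q' => f (q', p)) q := by
  have h : HasFDerivAt (fun q' => f (q', p)) (fderiv ℝ f (q, p) ∘L inl ℝ E E) q :=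
    hf.hasFDerivAt.comp q (hasFDerivAt_prodMk_left q p)
  rw [gradient, h.fderiv]
  rfl

lemma gradientProd_snd {f : E × E → ℝ} {q p : E} (hf : DifferentiableAt ℝ f (q, p)) :
    (gradientProd f (q, p)).2 = gradient (fun p' => f (q, p')) p := by
  have h : HasFDerivAt (fun p' => f (q, p')) (fderiv ℝ f (q, p) ∘L inr ℝ E E) p :=
    hf.hasFDerivAt.comp p (hasFDerivAt_prodMk_right q p)
  rw [gradient, h.fderiv]
  rfl

lemma hasFDerivAt_gradientProd {f : E × E → ℝ} {z : E × E} (hf : ContDiffAt ℝ 2 f z) :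
    HasFDerivAt (gradientProd f) (toDualProdSymm E ∘L fderiv ℝ (fderiv ℝ f) z) z :=
  (toDualProdSymm E).hasFDerivAt.comp z
    ((hf.fderiv_right (m := 1) le_rfl).differentiableAt one_ne_zero).hasFDerivAt

lemma inner_toDualProdSymm_comp_comm {B : E × E →L[ℝ] StrongDual ℝ (E × E)}
    (hB : ∀ a b, B a b = B b a) (a b : E × E) :
    inner ℝ ((toDualProdSymm E ∘L B) a).1 b.1 + inner ℝ ((toDualProdSymm E ∘L B) a).2 b.2 =
      inner ℝ a.1 ((toDualProdSymm E ∘L B) b).1 +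
        inner ℝ a.2 ((toDualProdSymm E ∘L B) b).2 := by
  rw [real_inner_comm _ a.1, real_inner_comm _ a.2, comp_apply, comp_apply,
    inner_toDualProdSymm, inner_toDualProdSymm, hB]

end ProdGradient

section Flow

variable {E : Type*} [NormedAddCommGroup E] [NormedSpace ℝ E]

variable (E) in
def projQTildeP : E × E × E × E →L[ℝ] E × E :=
  (fst ℝ E E ∘L snd ℝ E (E × E) ∘L snd ℝ E (E × E × E)).prod
    (fst ℝ E (E × E) ∘L snd ℝ E (E × E × E))

variable (E) in
def hamiltonianVectorB : E × E →L[ℝ] E × E × E × E :=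
  (snd ℝ E E).prod ((0 : E × E →L[ℝ] E).prod ((0 : E × E →L[ℝ] E).prod (-fst ℝ E E)))

@[simp]
lemma projQTildeP_apply (x : E × E × E × E) : projQTildeP E x = (x.2.2.1, x.2.1) := rfl

@[simp]
lemma hamiltonianVectorB_apply (g : E × E) : hamiltonianVectorB E g = (g.2, 0, 0, -g.1) := rfl

/- `psiHb Δt (gradientProd f)` is `ψ_{H_b}^{Δt}` for `H q p = f (q, p)`. -/
def psiHb (Δt : ℝ) (G : E × E → E × E) (x : E × E × E × E) : E × E × E × E :=
  x + Δt • hamiltonianVectorB E (G (projQTildeP E x))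

lemma fderiv_psiHb_apply {G : E × E → E × E} {G' : E × E →L[ℝ] E × E} {x : E × E × E × E}
    (hG : HasFDerivAt G G' (projQTildeP E x)) (Δt : ℝ) (w : E × E × E × E) :
    fderiv ℝ (psiHb Δt G) x w = psiHb Δt G' w := by
  have hX : HasFDerivAt (fun y => hamiltonianVectorB E (G (projQTildeP E y)))
      (hamiltonianVectorB E ∘L G' ∘L projQTildeP E) x :=
    (hamiltonianVectorB E).hasFDerivAt.comp x (hG.comp x (projQTildeP E).hasFDerivAt)
  have hψ : HasFDerivAt (psiHb Δt G)
      (ContinuousLinearMap.id ℝ _ + Δt • (hamiltonianVectorB E ∘L G' ∘L projQTildeP E)) x :=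
    (hasFDerivAt_id x).add (hX.const_smul Δt)
  rw [hψ.fderiv]
  rfl

end Flow

lemma extSymplForm_psiHb {d : ℕ} (Δt : ℝ)
    (A : EuclideanSpace ℝ (Fin d) × EuclideanSpace ℝ (Fin d) →L[ℝ]
      EuclideanSpace ℝ (Fin d) × EuclideanSpace ℝ (Fin d))
    (hA : ∀ a b, inner ℝ (A a).1 b.1 + inner ℝ (A a).2 b.2 =
      inner ℝ a.1 (A b).1 + inner ℝ a.2 (A b).2)
    (u v : EuclideanSpace ℝ (Fin d) × EuclideanSpace ℝ (Fin d) ×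
      EuclideanSpace ℝ (Fin d) × EuclideanSpace ℝ (Fin d)) :
    extSymplForm (psiHb Δt A u) (psiHb Δt A v) = extSymplForm u v := by
  have hAuv := hA (u.2.2.1, u.2.1) (v.2.2.1, v.2.1)
  simp only [extSymplForm, psiHb, hamiltonianVectorB_apply, projQTildeP_apply, Prod.smul_mk,
    smul_zero, smul_neg, Prod.fst_add, Prod.snd_add, add_zero, inner_add_left, inner_add_right,
    inner_smul_left, inner_smul_right, inner_neg_left, inner_neg_right, Real.ringHom_apply]
  linear_combination Δt * hAuv

/-- The map
`ψ_{H_b}^{Δt} : (q,p,q̃,p̃) ↦ (q + Δt∇_p H(q̃,p), p, q̃, p̃ - Δt∇_q̃ H(q̃,p))`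
is symplectic on the extended phase space with respect to the canonical symplectic
form pairing `(q,q̃)` with `(p,p̃)`. -/
theorem psi_Hb_symplectic
    {d : ℕ} (H : EuclideanSpace ℝ (Fin d) → EuclideanSpace ℝ (Fin d) → ℝ)
    (hH : ContDiff ℝ 2 (fun x : EuclideanSpace ℝ (Fin d) × EuclideanSpace ℝ (Fin d) => H x.1 x.2))
    (Δt : ℝ)
    (F : EuclideanSpace ℝ (Fin d) × EuclideanSpace ℝ (Fin d) ×
        EuclideanSpace ℝ (Fin d) × EuclideanSpace ℝ (Fin d) →
      EuclideanSpace ℝ (Fin d) × EuclideanSpace ℝ (Fin d) ×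
        EuclideanSpace ℝ (Fin d) × EuclideanSpace ℝ (Fin d))
    (hF : F = fun x =>
      (x.1 + Δt • gradient (fun p' => H x.2.2.1 p') x.2.1,
       x.2.1,
       x.2.2.1,
       x.2.2.2 - Δt • gradient (fun q' => H q' x.2.1) x.2.2.1)) :
    ∀ x u v, extSymplForm (fderiv ℝ F x u) (fderiv ℝ F x v) = extSymplForm u v := by
  intro x u v
  have hF_eq : F = psiHb Δt (gradientProd fun z => H z.1 z.2) := by
    funext y
    have hf := (hH.differentiable (by norm_num)).differentiableAt (x := (y.2.2.1, y.2.1))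
    simp only [hF, psiHb, projQTildeP_apply, hamiltonianVectorB_apply, gradientProd_fst hf,
      gradientProd_snd hf, Prod.ext_iff, Prod.fst_add, Prod.snd_add, Prod.smul_mk, smul_zero,
      add_zero, smul_neg, ← sub_eq_add_neg, and_self]
  have hG := hasFDerivAt_gradientProd (hH.contDiffAt (x := projQTildeP _ x))
  have hHessian := hH.contDiffAt.isSymmSndFDerivAt (x := projQTildeP _ x) (by simp)
  rw [hF_eq, fderiv_psiHb_apply hG, fderiv_psiHb_apply hG]
  exact extSymplForm_psiHb Δt _ (inner_toDualProdSymm_comp_comm hHessian) u v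
end

section
/- The linear map ψ_{ωH_c}^{Δt} defined by sending (q, p, q̃, p̃) to ((1/2)[(q+q̃) + R₁(q-q̃) + R₂(p-p̃)], (1/2)[(p+p̃) - R₂(q-q̃) + R₁(p-p̃)], (1/2)[(q+q̃) - R₁(q-q̃) - R₂(p-p̃)], (1/2)[(p+p̃) + R₂(q-q̃) - R₁(p-p̃)]), where R₁ = cos(2ωΔt)·I and R₂ = sin(2ωΔt)·I, is symplectic on R^{4d} with respect to the canonical symplectic form pairing (q, q̃) with (p, p̃). -/
open Real RealInnerProductSpace

section

variable {E : Type*} [NormedAddCommGroup E] [InnerProductSpace ℝ E]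

noncomputable def symplForm (x y : E × E) : ℝ := ⟪x.1, y.2⟫ - ⟪x.2, y.1⟫

noncomputable def rotate (θ : ℝ) (x : E × E) : E × E :=
  (cos θ • x.1 + sin θ • x.2, -sin θ • x.1 + cos θ • x.2)

theorem symplForm_rotate (θ : ℝ) (x y : E × E) :
    symplForm (rotate θ x) (rotate θ y) = symplForm x y := by
  simp only [symplForm, rotate, inner_add_left, inner_add_right, real_inner_smul_left,
    real_inner_smul_right]
  linear_combination (⟪x.1, y.2⟫ - ⟪x.2, y.1⟫) * sin_sq_add_cos_sq θ

def sumPart (x : E × E × E × E) : E × E := (x.1 + x.2.2.1, x.2.1 + x.2.2.2)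

def diffPart (x : E × E × E × E) : E × E := (x.1 - x.2.2.1, x.2.1 - x.2.2.2)

noncomputable def psiHc (θ : ℝ) (x : E × E × E × E) : E × E × E × E :=
  ((1 / 2 : ℝ) • ((x.1 + x.2.2.1) + cos θ • (x.1 - x.2.2.1) + sin θ • (x.2.1 - x.2.2.2)),
   (1 / 2 : ℝ) • ((x.2.1 + x.2.2.2) - sin θ • (x.1 - x.2.2.1) + cos θ • (x.2.1 - x.2.2.2)),
   (1 / 2 : ℝ) • ((x.1 + x.2.2.1) - cos θ • (x.1 - x.2.2.1) - sin θ • (x.2.1 - x.2.2.2)),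
   (1 / 2 : ℝ) • ((x.2.1 + x.2.2.2) + sin θ • (x.1 - x.2.2.1) - cos θ • (x.2.1 - x.2.2.2)))

theorem sumPart_psiHc (θ : ℝ) (x : E × E × E × E) : sumPart (psiHc θ x) = sumPart x := by
  ext <;> simp only [sumPart, psiHc] <;> module

theorem diffPart_psiHc (θ : ℝ) (x : E × E × E × E) :
    diffPart (psiHc θ x) = rotate θ (diffPart x) := by
  ext <;> simp only [diffPart, psiHc, rotate] <;> module

end

section

variable {d : ℕ}

theorem extSymplForm_eq_sumPart_add_diffPart
    (u v : EuclideanSpace ℝ (Fin d) × EuclideanSpace ℝ (Fin d) ×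
      EuclideanSpace ℝ (Fin d) × EuclideanSpace ℝ (Fin d)) :
    extSymplForm u v =
      (symplForm (sumPart u) (sumPart v) + symplForm (diffPart u) (diffPart v)) / 2 := by
  simp only [extSymplForm, symplForm, sumPart, diffPart, inner_add_left, inner_add_right,
    inner_sub_left, inner_sub_right]
  ring

theorem extSymplForm_psiHc (θ : ℝ)
    (u v : EuclideanSpace ℝ (Fin d) × EuclideanSpace ℝ (Fin d) ×
      EuclideanSpace ℝ (Fin d) × EuclideanSpace ℝ (Fin d)) :
    extSymplForm (psiHc θ u) (psiHc θ v) = extSymplForm u v := by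
  rw [extSymplForm_eq_sumPart_add_diffPart, extSymplForm_eq_sumPart_add_diffPart,
    sumPart_psiHc, sumPart_psiHc, diffPart_psiHc, diffPart_psiHc, symplForm_rotate]

end

/-- The linear map `ψ_{ωH_c}^{Δt}` sending `(q,p,q̃,p̃)` to
`((1/2)[(q+q̃) + R₁(q-q̃) + R₂(p-p̃)], (1/2)[(p+p̃) - R₂(q-q̃) + R₁(p-p̃)],
  (1/2)[(q+q̃) - R₁(q-q̃) - R₂(p-p̃)], (1/2)[(p+p̃) + R₂(q-q̃) - R₁(p-p̃)])`,
with `R₁ = cos(2ωΔt)I` and `R₂ = sin(2ωΔt)I`, is symplectic on `ℝ^{4d}` with respect to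
the canonical symplectic form pairing `(q,q̃)` with `(p,p̃)`.  (Being linear, the map is
its own Jacobian, so symplecticity of the Jacobian is preservation of the form by the map.) -/
theorem psi_Hc_symplectic
    {d : ℕ} (ω Δt : ℝ)
    (F : EuclideanSpace ℝ (Fin d) × EuclideanSpace ℝ (Fin d) ×
        EuclideanSpace ℝ (Fin d) × EuclideanSpace ℝ (Fin d) →
      EuclideanSpace ℝ (Fin d) × EuclideanSpace ℝ (Fin d) ×
        EuclideanSpace ℝ (Fin d) × EuclideanSpace ℝ (Fin d))
    (hF : F = fun x =>
      ((1 / 2 : ℝ) • ((x.1 + x.2.2.1) + Real.cos (2 * ω * Δt) • (x.1 - x.2.2.1)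
          + Real.sin (2 * ω * Δt) • (x.2.1 - x.2.2.2)),
       (1 / 2 : ℝ) • ((x.2.1 + x.2.2.2) - Real.sin (2 * ω * Δt) • (x.1 - x.2.2.1)
          + Real.cos (2 * ω * Δt) • (x.2.1 - x.2.2.2)),
       (1 / 2 : ℝ) • ((x.1 + x.2.2.1) - Real.cos (2 * ω * Δt) • (x.1 - x.2.2.1)
          - Real.sin (2 * ω * Δt) • (x.2.1 - x.2.2.2)),
       (1 / 2 : ℝ) • ((x.2.1 + x.2.2.2) + Real.sin (2 * ω * Δt) • (x.1 - x.2.2.1)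
          - Real.cos (2 * ω * Δt) • (x.2.1 - x.2.2.2)))) :
    ∀ u v, extSymplForm (F u) (F v) = extSymplForm u v := by
  subst hF
  exact extSymplForm_psiHc (2 * ω * Δt)
end
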